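/- For all integers m ≥ 0 and k ≥ 1, the Bernoulli polynomial of order k satisfies B_m^{(k)}(x) = Σ_{n=0}^m S_2(m,n) D_n^(k)(x) as an identity of polynomials in x over ℚ, where S_2 denotes the Stirling numbers of the second kind and D_n^(k)(x) are the Daehee polynomials of order k. -/

import Mathlib

open PowerSeries Polynomial Finset

/-- `log(1+t) = Σ_{n≥1} (-1)^{n+1} t^n / n` as a formal power series over ℚ. -/
noncomputable def logOneAdd : PowerSeries ℚ :=
  PowerSeries.mk fun n => if n = 0 then 0 else (-1) ^ (n + 1) / (n : ℚ)

/-- `−log(1−t) = Σ_{n≥1} t^n / n` as a formal power series over ℚ. -/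
noncomputable def negLogOneSub : PowerSeries ℚ :=
  PowerSeries.mk fun n => if n = 0 then 0 else 1 / (n : ℚ)

/-- `e^t = Σ_{n≥0} t^n / n!` as a formal power series over ℚ. -/
noncomputable def expQ : PowerSeries ℚ :=
  PowerSeries.mk fun n => 1 / (n.factorial : ℚ)

/-- `log(1+t)` as a formal power series with coefficients in ℚ[x]. -/
noncomputable def logOneAddP : PowerSeries (Polynomial ℚ) :=
  PowerSeries.mk fun n => Polynomial.C (if n = 0 then 0 else (-1) ^ (n + 1) / (n : ℚ))

/-- `−log(1−t)` as a formal power series with coefficients in ℚ[x]. -/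
noncomputable def negLogOneSubP : PowerSeries (Polynomial ℚ) :=
  PowerSeries.mk fun n => Polynomial.C (if n = 0 then 0 else 1 / (n : ℚ))

/-- `e^t` as a formal power series with coefficients in ℚ[x]. -/
noncomputable def expP : PowerSeries (Polynomial ℚ) :=
  PowerSeries.mk fun n => Polynomial.C (1 / (n.factorial : ℚ))

/-- `e^{xt} = Σ_{n≥0} x^n t^n / n!` as a formal power series with coefficients in ℚ[x]. -/
noncomputable def expXT : PowerSeries (Polynomial ℚ) :=
  PowerSeries.mk fun n => Polynomial.C (1 / (n.factorial : ℚ)) * Polynomial.X ^ n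

/-- The binomial polynomial `x(x−1)⋯(x−n+1)/n! ∈ ℚ[x]`. -/
noncomputable def binomPoly (n : ℕ) : Polynomial ℚ :=
  Polynomial.C (1 / (n.factorial : ℚ)) *
    ∏ i ∈ Finset.range n, (Polynomial.X - Polynomial.C (i : ℚ))

/-- `(1+t)^x = Σ_{n≥0} C(x,n) t^n` as a formal power series with coefficients in ℚ[x]. -/
noncomputable def onePlusTX : PowerSeries (Polynomial ℚ) :=
  PowerSeries.mk binomPoly

/-- `(1−t)^x = Σ_{n≥0} (−1)^n C(x,n) t^n` as a formal power series with coefficients in ℚ[x]. -/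
noncomputable def oneSubTX : PowerSeries (Polynomial ℚ) :=
  PowerSeries.mk fun n => (-1) ^ n * binomPoly n

/-!
Substituting `t ↦ e^t - 1` is a ring endomorphism of `ℚ[x]⟦t⟧`. It sends `t` to `e^t - 1`,
`log(1+t)` to `t` and `(1+t)^x` to `e^{xt}`, so it turns the generating function of the Daehee
polynomials into `t^k e^{xt} = (e^t - 1)^k Σ_n D_n(x) (e^t - 1)^n / n!`. Cancelling `(e^t - 1)^k`
against the generating function of `B^{(k)}` gives
`B_m^{(k)}(x) / m! = Σ_n D_n(x) / n! · [t^m] (e^t - 1)^n = Σ_n S_2(m,n) D_n(x) / m!`.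

The image of `(1+t)^x` is found coefficientwise: both sides are polynomials in `x`, and at
`x = r ∈ ℕ` the left one is `(1 + (e^t - 1))^r = e^{rt}`. The image of `log(1+t)` follows by
taking the coefficient of `x`, since the `x`-linear part of `(1+t)^x = exp(x log(1+t))` is
`log(1+t)`.
-/

namespace PowerSeries

variable {R : Type*} [CommRing R]

theorem coeff_subst_eq_sum_range {a : R⟦X⟧} (ha : constantCoeff a = 0) (F : R⟦X⟧) (M : ℕ) :
    coeff M (F.subst a) = ∑ n ∈ range (M + 1), coeff n F * coeff M (a ^ n) := by
  rw [coeff_subst' (HasSubst.of_constantCoeff_zero' ha),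
    finsum_eq_sum_of_support_subset (s := range (M + 1))]
  · simp only [smul_eq_mul]
  · intro n hn
    rw [coe_range, Set.mem_Iio, Nat.lt_succ_iff]
    by_contra! hlt
    have hdvd : (X : R⟦X⟧) ^ n ∣ a ^ n := pow_dvd_pow_of_dvd (X_dvd_iff.2 ha) n
    exact hn (by simp only [X_pow_dvd_iff.1 hdvd M hlt, smul_zero])

variable (A : Type*) [CommRing A] [Algebra ℚ A]

theorem constantCoeff_exp_sub_one : constantCoeff (exp A - 1) = 0 := by
  simp

theorem exp_sub_one_ne_zero [Nontrivial A] : exp A - 1 ≠ 0 := by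
  intro h
  simpa using congrArg (coeff 1) h

theorem coeff_exp_sub_one_pow (n M : ℕ) :
    coeff M ((exp A - 1) ^ n) = algebraMap ℚ A (coeff M ((exp ℚ - 1) ^ n)) := by
  rw [← map_exp (algebraMap ℚ A), ← map_one (PowerSeries.map (algebraMap ℚ A)), ← map_sub,
    ← map_pow, coeff_map]

end PowerSeries

theorem sum_choose_mul_coeff_exp_sub_one_pow (r M : ℕ) :
    ∑ n ∈ range (M + 1), (r.choose n : ℚ) * coeff M ((exp ℚ - 1) ^ n) = r ^ M / M.factorial := by
  have hsubst : ((1 + PowerSeries.X : ℚ⟦X⟧) ^ r).subst (exp ℚ - 1) = exp ℚ ^ r := by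
    rw [← coe_substAlgHom HasSubst.exp_sub_one, map_pow, map_add, map_one, substAlgHom_X]
    ring
  have h := coeff_subst_eq_sum_range (constantCoeff_exp_sub_one ℚ) ((1 + PowerSeries.X) ^ r) M
  rw [hsubst, ← binomialSeries_nat (R := ℚ), exp_pow_eq_rescale_exp, coeff_rescale, coeff_exp] at h
  simp only [binomialSeries_coeff, Ring.choose_natCast, smul_eq_mul, mul_one,
    Algebra.algebraMap_self, RingHom.id_apply] at h
  rw [← h, mul_one_div]

theorem eval_binomPoly (r n : ℕ) : (binomPoly n).eval (r : ℚ) = r.choose n := by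
  rw [binomPoly, eval_mul, eval_C, eval_prod]
  simp only [eval_sub, eval_X, eval_C]
  rw [← descPochhammer_eval_eq_prod_range, descPochhammer_eval_eq_descFactorial,
    Nat.descFactorial_eq_factorial_mul_choose]
  push_cast
  field_simp

theorem coeff_one_binomPoly (n : ℕ) :
    (binomPoly n).coeff 1 = if n = 0 then 0 else (-1) ^ (n + 1) / (n : ℚ) := by
  cases n with
  | zero => simp [binomPoly, Polynomial.coeff_one]
  | succ n =>
    have hprod : ∏ j ∈ range n, (-((j + 1 : ℕ) : ℚ)) = (-1) ^ n * n.factorial := by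
      calc ∏ j ∈ range n, (-((j + 1 : ℕ) : ℚ))
          = ∏ j ∈ range n, ((-1) * ((j + 1 : ℕ) : ℚ)) :=
            prod_congr rfl fun _ _ => neg_eq_neg_one_mul _
        _ = (-1) ^ n * n.factorial := by
          rw [prod_mul_distrib, prod_const, card_range, ← Nat.cast_prod,
            prod_range_add_one_eq_factorial]
    rw [binomPoly, prod_range_succ', Polynomial.coeff_C_mul, Nat.cast_zero, C_0, sub_zero,
      coeff_mul_X, coeff_zero_eq_eval_zero, eval_prod]
    simp only [eval_sub, eval_X, eval_C, zero_sub]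
    rw [hprod, if_neg n.succ_ne_zero, Nat.factorial_succ]
    push_cast
    field_simp
    ring

theorem sum_binomPoly_mul_coeff_exp_sub_one_pow (M : ℕ) :
    ∑ n ∈ range (M + 1), binomPoly n * Polynomial.C (coeff M ((exp ℚ - 1) ^ n))
      = Polynomial.C (1 / (M.factorial : ℚ)) * Polynomial.X ^ M := by
  refine eq_of_infinite_eval_eq _ _
    ((Set.infinite_range_of_injective Nat.cast_injective).mono ?_)
  rintro _ ⟨r, rfl⟩
  simp only [Set.mem_ofPred_eq, eval_finsetSum, eval_mul, eval_C, eval_pow, eval_X, eval_binomPoly,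
    sum_choose_mul_coeff_exp_sub_one_pow]
  ring

theorem PowerSeries.log_rat_subst_exp_sub_one : (log ℚ).subst (exp ℚ - 1) = PowerSeries.X := by
  ext M
  have h := congrArg (Polynomial.coeff · 1) (sum_binomPoly_mul_coeff_exp_sub_one_pow M)
  simp only [finsetSum_coeff, Polynomial.coeff_mul_C, coeff_one_binomPoly, Polynomial.coeff_C_mul,
    Polynomial.coeff_X_pow] at h
  rw [coeff_subst_eq_sum_range (constantCoeff_exp_sub_one ℚ), PowerSeries.coeff_X]
  simp only [coeff_log, Algebra.algebraMap_self, RingHom.id_apply]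
  rw [h]
  rcases eq_or_ne M 1 with rfl | hM
  · simp
  · simp [hM, Ne.symm hM]

theorem PowerSeries.log_subst_exp_sub_one (A : Type*) [CommRing A] [Algebra ℚ A] :
    (log A).subst (exp A - 1) = PowerSeries.X := by
  ext M
  have h := congrArg (coeff M) log_rat_subst_exp_sub_one
  rw [coeff_subst_eq_sum_range (constantCoeff_exp_sub_one ℚ), PowerSeries.coeff_X] at h
  rw [coeff_subst_eq_sum_range (constantCoeff_exp_sub_one A), PowerSeries.coeff_X]
  simp_rw [coeff_log, coeff_exp_sub_one_pow A, Algebra.algebraMap_self, RingHom.id_apply] at *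
  calc _ = algebraMap ℚ A
        (∑ n ∈ range (M + 1), (if n = 0 then 0 else (-1) ^ (n + 1) / (n : ℚ))
          * coeff M ((exp ℚ - 1) ^ n)) := by
        simp only [map_sum, map_mul, apply_ite (algebraMap ℚ A), map_zero]
    _ = _ := by rw [h]; split_ifs <;> simp

theorem onePlusTX_subst_exp_sub_one : onePlusTX.subst (exp ℚ[X] - 1) = expXT := by
  ext M : 1
  rw [coeff_subst_eq_sum_range (constantCoeff_exp_sub_one ℚ[X]), expXT, coeff_mk]
  simp_rw [onePlusTX, coeff_mk, coeff_exp_sub_one_pow ℚ[X], Polynomial.algebraMap_eq]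
  exact sum_binomPoly_mul_coeff_exp_sub_one_pow M

theorem logOneAddP_eq_log : logOneAddP = log ℚ[X] := by
  ext n : 1
  rw [logOneAddP, coeff_mk, coeff_log, Polynomial.algebraMap_eq, apply_ite Polynomial.C, map_zero]

theorem expP_eq_exp : expP = exp ℚ[X] := by
  ext n : 1
  simp [expP, Polynomial.algebraMap_eq]

theorem expQ_eq_exp : expQ = exp ℚ := by
  ext n
  simp [expQ]

theorem coeff_mk_mul_factorial_inv_subst_exp_sub_one (S2 : ℕ → ℕ → ℚ) (m : ℕ)
    (hS2 : ∀ n ≤ m, coeff m ((exp ℚ - 1) ^ n) = n.factorial * S2 m n / m.factorial)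
    (f : ℕ → ℚ[X]) :
    coeff m ((mk fun j => Polynomial.C ((j.factorial : ℚ)⁻¹) * f j).subst (exp ℚ[X] - 1))
      = Polynomial.C ((m.factorial : ℚ)⁻¹) * ∑ n ∈ range (m + 1), Polynomial.C (S2 m n) * f n := by
  rw [coeff_subst_eq_sum_range (constantCoeff_exp_sub_one ℚ[X]), mul_sum]
  refine sum_congr rfl fun n hn => ?_
  rw [coeff_mk, coeff_exp_sub_one_pow, Polynomial.algebraMap_eq, hS2 n (mem_range_succ_iff.1 hn),
    mul_right_comm, ← Polynomial.C_mul, ← mul_assoc, ← Polynomial.C_mul]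
  congr 2
  field_simp

theorem bernoulli_poly_eq_stirling2_daehee_poly_sum_general
    (k : ℕ) (m : ℕ)
    (D : ℕ → Polynomial ℚ)
    (hD : logOneAddP ^ k * onePlusTX
      = PowerSeries.X ^ k
          * PowerSeries.mk (fun j => Polynomial.C ((j.factorial : ℚ)⁻¹) * D j))
    (B : ℕ → Polynomial ℚ)
    (hB : (PowerSeries.X : PowerSeries (Polynomial ℚ)) ^ k * expXT
      = (expP - 1) ^ k
          * PowerSeries.mk (fun j => Polynomial.C ((j.factorial : ℚ)⁻¹) * B j))
    (S2 : ℕ → ℕ → ℚ)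
    (hS2 : ∀ j : ℕ, (expQ - 1) ^ j
      = PowerSeries.mk (fun l =>
          if j ≤ l then (j.factorial : ℚ) * S2 l j / (l.factorial : ℚ) else 0)) :
    B m = ∑ n ∈ Finset.range (m + 1), Polynomial.C (S2 m n) * D n := by
  have hsubst := congrArg (substAlgHom (HasSubst.exp_sub_one (A := ℚ[X]))) hD
  simp only [map_mul, map_pow, coe_substAlgHom, logOneAddP_eq_log, log_subst_exp_sub_one,
    onePlusTX_subst_exp_sub_one, subst_X HasSubst.exp_sub_one] at hsubst
  rw [expP_eq_exp] at hB
  have hsubst_D_eq_B :=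
    mul_left_cancel₀ (pow_ne_zero k (exp_sub_one_ne_zero ℚ[X])) (hsubst.symm.trans hB)
  have hm := congrArg (PowerSeries.coeff m) hsubst_D_eq_B
  rw [coeff_mk_mul_factorial_inv_subst_exp_sub_one S2 m
    (fun n hn => by rw [← expQ_eq_exp, hS2, coeff_mk, if_pos hn]), coeff_mk] at hm
  have hC : Polynomial.C ((m.factorial : ℚ)⁻¹) ≠ 0 := by simp [Nat.factorial_ne_zero]
  exact (mul_left_cancel₀ hC hm).symm

/-- For `m ≥ 0`, `k ≥ 1`, the Bernoulli polynomials of order `k` satisfy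
`B_m^{(k)}(x) = Σ_{n=0}^m S_2(m,n) D_n^(k)(x)` in `ℚ[x]`, where `S_2` are the Stirling
numbers of the second kind and `D_n^(k)(x)` the Daehee polynomials of order `k`. -/
theorem bernoulli_poly_eq_stirling2_daehee_poly_sum
    (k : ℕ) (hk : 1 ≤ k) (m : ℕ)
    (D : ℕ → Polynomial ℚ)
    (hD : logOneAddP ^ k * onePlusTX
      = PowerSeries.X ^ k
          * PowerSeries.mk (fun j => Polynomial.C ((j.factorial : ℚ)⁻¹) * D j))
    (B : ℕ → Polynomial ℚ)
    (hB : (PowerSeries.X : PowerSeries (Polynomial ℚ)) ^ k * expXT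
      = (expP - 1) ^ k
          * PowerSeries.mk (fun j => Polynomial.C ((j.factorial : ℚ)⁻¹) * B j))
    (S2 : ℕ → ℕ → ℚ)
    (hS2 : ∀ j : ℕ, (expQ - 1) ^ j
      = PowerSeries.mk (fun l =>
          if j ≤ l then (j.factorial : ℚ) * S2 l j / (l.factorial : ℚ) else 0)) :
    B m = ∑ n ∈ Finset.range (m + 1), Polynomial.C (S2 m n) * D n :=
  bernoulli_poly_eq_stirling2_daehee_poly_sum_general k m D hD B hB S2 hS2
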